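/- For any simple graph G and integers r, s with 1 ≤ r ≤ s and r dividing s, we have λ_r(G)/r ≥ λ_s(G)/s, i.e., s·λ_r(G) ≥ r·λ_s(G). -/

import Mathlib

/-!
Take an `r`-list assignment `L` attaining `λ_r(G)` and replace every color `a` by the `m = s / r`
colors `m * a + i`, `i < m`. This gives an `s`-list assignment, and a partial coloring from it
splits, according to the residues of its colors mod `m`, into `m` partial colorings from `L`
(read off by the quotients mod `m`). Hence `λ_s(G) ≤ m · λ_r(G)`.
-/

open SimpleGraph

/-- `c` properly colors each vertex of `S` from its list `L`. -/
def IsPartialListColoring {V : Type*} (G : SimpleGraph V) (L : V → Finset ℕ)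
    (S : Set V) (c : V → ℕ) : Prop :=
  (∀ v ∈ S, c v ∈ L v) ∧ ∀ u ∈ S, ∀ v ∈ S, G.Adj u v → c u ≠ c v

/-- `λ_L(G)`: the maximum number of vertices properly colorable from the lists of `L`. -/
noncomputable def lamL {V : Type*} (G : SimpleGraph V) (L : V → Finset ℕ) : ℕ :=
  sSup {k | ∃ (S : Finset V) (c : V → ℕ), S.card = k ∧ IsPartialListColoring G L S c}

/-- `λ_t(G)`: the minimum of `λ_L(G)` over all `t`-list assignments `L`. -/
noncomputable def lam {V : Type*} (G : SimpleGraph V) (t : ℕ) : ℕ :=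
  sInf {m | ∃ L : V → Finset ℕ, (∀ v, (L v).card = t) ∧ lamL G L = m}

/-- `G` admits a full proper coloring from the lists of `L`. -/
def ListColorable {V : Type*} (G : SimpleGraph V) (L : V → Finset ℕ) : Prop :=
  ∃ c : V → ℕ, (∀ v, c v ∈ L v) ∧ ∀ u v, G.Adj u v → c u ≠ c v

/-- The list chromatic number of `G`. -/
noncomputable def listChromaticNumber {V : Type*} (G : SimpleGraph V) : ℕ :=
  sInf {k | ∀ L : V → Finset ℕ, (∀ v, (L v).card = k) → ListColorable G L}

open Finset

lemma Nat.mul_add_div_mod_of_lt {m a i : ℕ} (hi : i < m) :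
    (m * a + i) / m = a ∧ (m * a + i) % m = i :=
  (Nat.div_mod_unique (by omega)).2 ⟨by ring, hi⟩

section

variable {V : Type*} (G : SimpleGraph V)

lemma card_le_lamL [Fintype V] {L : V → Finset ℕ} {S : Finset V} {c : V → ℕ}
    (h : IsPartialListColoring G L S c) : #S ≤ lamL G L := by
  refine le_csSup ?_ ⟨S, c, rfl, h⟩
  refine ⟨Fintype.card V, ?_⟩
  rintro _ ⟨S, -, rfl, -⟩
  exact S.card_le_univ

lemma lamL_le {L : V → Finset ℕ} {n : ℕ}
    (h : ∀ (S : Finset V) (c : V → ℕ), IsPartialListColoring G L S c → #S ≤ n) :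
    lamL G L ≤ n :=
  csSup_le' <| by rintro k ⟨S, c, rfl, hc⟩; exact h S c hc

lemma lam_le_lamL {L : V → Finset ℕ} {t : ℕ} (hL : ∀ v, #(L v) = t) : lam G t ≤ lamL G L :=
  Nat.sInf_le ⟨L, hL, rfl⟩

lemma exists_lamL_eq_lam (t : ℕ) : ∃ L : V → Finset ℕ, (∀ v, #(L v) = t) ∧ lamL G L = lam G t :=
  Nat.sInf_mem (s := {m | ∃ L : V → Finset ℕ, (∀ v, #(L v) = t) ∧ lamL G L = m})
    ⟨_, fun _ => range t, fun _ => card_range t, rfl⟩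

def blowUpLists (L : V → Finset ℕ) (m : ℕ) (v : V) : Finset ℕ :=
  (L v ×ˢ range m).image fun p => m * p.1 + p.2

lemma mem_blowUpLists {L : V → Finset ℕ} {m c : ℕ} {v : V} :
    c ∈ blowUpLists L m v ↔ c / m ∈ L v ∧ c % m < m := by
  simp only [blowUpLists, mem_image, mem_product, mem_range, Prod.exists]
  constructor
  · rintro ⟨a, i, ⟨ha, hi⟩, rfl⟩
    obtain ⟨hdiv, hmod⟩ := Nat.mul_add_div_mod_of_lt (a := a) hi
    exact ⟨by rwa [hdiv], by rwa [hmod]⟩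
  · rintro ⟨hdiv, hmod⟩
    exact ⟨c / m, c % m, ⟨hdiv, hmod⟩, Nat.div_add_mod c m⟩

lemma card_blowUpLists (L : V → Finset ℕ) (m : ℕ) (v : V) :
    #(blowUpLists L m v) = #(L v) * m := by
  rw [blowUpLists, card_image_of_injOn, card_product, card_range]
  rintro ⟨a, i⟩ hp ⟨b, j⟩ hq hpq
  simp only [coe_product, Set.mem_prod, mem_coe, mem_range] at hp hq hpq
  obtain ⟨ha, hi⟩ := Nat.mul_add_div_mod_of_lt (a := a) hp.2
  obtain ⟨hb, hj⟩ := Nat.mul_add_div_mod_of_lt (a := b) hq.2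
  rw [hpq] at ha hi
  exact Prod.ext (ha.symm.trans hb) (hi.symm.trans hj)

lemma IsPartialListColoring.div_of_blowUpLists {L : V → Finset ℕ} {m : ℕ} {S : Set V}
    {c : V → ℕ} (h : IsPartialListColoring G (blowUpLists L m) S c) (i : ℕ) :
    IsPartialListColoring G L {v ∈ S | c v % m = i} (c · / m) := by
  refine ⟨fun v hv => (mem_blowUpLists.1 (h.1 v hv.1)).1, ?_⟩
  rintro u ⟨hu, hui⟩ v ⟨hv, hvi⟩ hadj heq
  exact h.2 u hu v hv hadj (Nat.ext_div_mod heq (hui.trans hvi.symm))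

lemma lamL_blowUpLists_le [Fintype V] (L : V → Finset ℕ) (m : ℕ) :
    lamL G (blowUpLists L m) ≤ m * lamL G L := by
  refine lamL_le G fun S c hc => ?_
  have hres : ∀ v ∈ S, c v % m ∈ range m := fun v hv =>
    mem_range.2 (mem_blowUpLists.1 (hc.1 v hv)).2
  calc #S = ∑ i ∈ range m, #{v ∈ S | c v % m = i} := card_eq_sum_card_fiberwise hres
    _ ≤ ∑ _i ∈ range m, lamL G L := sum_le_sum fun i _ =>
        card_le_lamL G (by simpa using hc.div_of_blowUpLists G i)
    _ = m * lamL G L := by rw [sum_const, card_range, smul_eq_mul]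

lemma lam_mul_le [Fintype V] (t m : ℕ) : lam G (t * m) ≤ m * lam G t := by
  obtain ⟨L, hL, hLt⟩ := exists_lamL_eq_lam G t
  calc lam G (t * m) ≤ lamL G (blowUpLists L m) :=
        lam_le_lamL G fun v => by rw [card_blowUpLists, hL]
    _ ≤ m * lam G t := hLt ▸ lamL_blowUpLists_le G L m

end

theorem lam_div_monotone_general {V : Type*} [Fintype V] (G : SimpleGraph V)
    (r s : ℕ) (hdvd : r ∣ s) :
    r * lam G s ≤ s * lam G r := by
  obtain ⟨m, rfl⟩ := hdvd
  calc r * lam G (r * m) ≤ r * (m * lam G r) := Nat.mul_le_mul_left r (lam_mul_le G r m)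
    _ = r * m * lam G r := (Nat.mul_assoc r m _).symm

theorem lam_div_monotone {V : Type*} [Fintype V] (G : SimpleGraph V)
    (r s : ℕ) (hr : 1 ≤ r) (hrs : r ≤ s) (hdvd : r ∣ s) :
    r * lam G s ≤ s * lam G r :=
  lam_div_monotone_general G r s hdvd
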